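/- arXiv:2106.15603 — 3 statements merged into one kernel-verified Lean document; each statement's English description precedes it below -/
import Mathlib

section
/- For every fixed real n > 2, there exists a unique q_n ∈ (0,1) such that g(q_n, n) = 0; moreover g(q,n) < 0 for all q ∈ (q_n, 1) and g(q,n) > 0 for all q ∈ (0, q_n). -/
open Real Set

theorem StrictAntiOn.exists_unique_zero_Ioo {f : ℝ → ℝ} {a b : ℝ} (hab : a ≤ b)
    (hcont : ContinuousOn f (Icc a b)) (hanti : StrictAntiOn f (Icc a b))
    (ha : 0 < f a) (hb : f b < 0) :
    ∃ c ∈ Ioo a b, f c = 0 ∧ (∀ x ∈ Ioo a b, f x = 0 → x = c) ∧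
      (∀ x ∈ Ioo c b, f x < 0) ∧ (∀ x ∈ Ioo a c, 0 < f x) := by
  obtain ⟨c, hcIcc, hc⟩ := intermediate_value_Icc' hab hcont ⟨hb.le, ha.le⟩
  have hcIoo : c ∈ Ioo a b :=
    ⟨lt_of_le_of_ne hcIcc.1 (by rintro rfl; linarith),
      lt_of_le_of_ne hcIcc.2 (by rintro rfl; linarith)⟩
  refine ⟨c, hcIoo, hc, fun x hx hx0 => ?_, fun x hx => ?_, fun x hx => ?_⟩
  · exact hanti.injOn (Ioo_subset_Icc_self hx) hcIcc (hx0.trans hc.symm)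
  · simpa [hc] using hanti hcIcc ⟨(hcIoo.1.trans hx.1).le, hx.2.le⟩ hx.1
  · simpa [hc] using hanti ⟨hx.1.le, (hx.2.trans hcIoo.2).le⟩ hcIcc hx.2

noncomputable def g (q n : ℝ) : ℝ := 2 / n - 2 * q ^ n + q ^ (2 * n - 1)

section

variable {n : ℝ}

theorem continuous_g (hn : 1 / 2 ≤ n) : Continuous fun q => g q n :=
  (continuous_const.sub (continuous_const.mul (continuous_rpow_const (by linarith)))).add
    (continuous_rpow_const (by linarith))

theorem hasDerivAt_g {q : ℝ} (hq : 0 < q) :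
    HasDerivAt (fun q => g q n) ((2 * n - 1) * q ^ (2 * n - 2) - 2 * n * q ^ (n - 1)) q := by
  have h := ((hasDerivAt_const q (2 / n)).sub
    ((hasDerivAt_rpow_const (p := n) (Or.inl hq.ne')).const_mul 2)).add
    (hasDerivAt_rpow_const (p := 2 * n - 1) (Or.inl hq.ne'))
  rw [show 2 * n - 1 - 1 = 2 * n - 2 by ring] at h
  exact h.congr_deriv (by ring)

theorem strictAntiOn_g (hn : 1 < n) : StrictAntiOn (fun q => g q n) (Icc 0 1) := by
  refine strictAntiOn_of_deriv_neg (convex_Icc 0 1) (continuous_g (by linarith)).continuousOn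
    fun q hq => ?_
  rw [interior_Icc] at hq
  rw [(hasDerivAt_g hq.1).deriv]
  set t := q ^ (n - 1)
  have ht0 : 0 < t := rpow_pos_of_pos hq.1 _
  have ht1 : t < 1 := rpow_lt_one hq.1.le hq.2 (by linarith)
  have hsq : q ^ (2 * n - 2) = t * t := by rw [← rpow_add hq.1]; ring_nf
  -- with `t = q ^ (n - 1) ∈ (0, 1)` the derivative is `t ((2n - 1) t - 2n) < 0`
  rw [hsq]
  nlinarith [mul_pos ht0 ht0, mul_lt_mul_of_pos_right ht1 ht0]

theorem g_zero (hn : 1 / 2 < n) : g 0 n = 2 / n := by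
  simp [g, zero_rpow (by linarith : n ≠ 0), zero_rpow (by linarith : 2 * n - 1 ≠ 0)]

theorem g_one : g 1 n = 2 / n - 1 := by
  simp only [g, one_rpow]; ring

end

/-- For every fixed real `n > 2`, there is a unique `q_n ∈ (0,1)` with
`g(q_n,n) = 0`, where `g(q,n) = 2/n - 2 q^n + q^(2n-1)`; moreover `g(q,n) < 0`
for `q ∈ (q_n,1)` and `g(q,n) > 0` for `q ∈ (0,q_n)`. -/
theorem stmt_2 (n : ℝ) (hn : 2 < n) :
    ∃ qn ∈ Set.Ioo (0 : ℝ) 1,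
      (2 / n - 2 * qn ^ n + qn ^ (2 * n - 1) = 0) ∧
      (∀ q ∈ Set.Ioo (0 : ℝ) 1, 2 / n - 2 * q ^ n + q ^ (2 * n - 1) = 0 → q = qn) ∧
      (∀ q ∈ Set.Ioo qn 1, 2 / n - 2 * q ^ n + q ^ (2 * n - 1) < 0) ∧
      (∀ q ∈ Set.Ioo (0 : ℝ) qn, 0 < 2 / n - 2 * q ^ n + q ^ (2 * n - 1)) := by
  have hg0 : 0 < g 0 n := by rw [g_zero (by linarith)]; positivity
  have hg1 : g 1 n < 0 := by
    rw [g_one, sub_neg, div_lt_one (by linarith)]; linarith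
  exact StrictAntiOn.exists_unique_zero_Ioo zero_le_one
    (continuous_g (by linarith)).continuousOn (strictAntiOn_g (by linarith)) hg0 hg1
end

section
/- For every real n > 2 and every q ∈ (0, 1/2], g(q,n) > 0. -/
open Real Set

/-! Since `2 ^ n > n`, every `q ≤ 1/2` has `q ^ n < 1 / n`; hence `2 q ^ n < 2 / n`, and the
remaining term `q ^ (2n - 1)` is positive. -/

theorem lt_two_rpow_self {x : ℝ} (hx : 1 ≤ x) : x < 2 ^ x := by
  have bernoulli := one_add_mul_self_le_rpow_one_add (s := 1) (by norm_num) hx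
  norm_num at bernoulli
  linarith

theorem rpow_lt_inv_self_of_le_half {q x : ℝ} (hq₀ : 0 ≤ q) (hq : q ≤ 1 / 2) (hx : 1 ≤ x) :
    q ^ x < x⁻¹ :=
  calc q ^ x ≤ (2⁻¹ : ℝ) ^ x := rpow_le_rpow hq₀ (by linarith) (by linarith)
    _ = (2 ^ x)⁻¹ := inv_rpow (by norm_num) x
    _ < x⁻¹ := inv_strictAnti₀ (by linarith) (lt_two_rpow_self hx)

/-- For every real `n > 2` and every `q ∈ (0, 1/2]`, `g(q,n) > 0`, where
`g(q,n) = 2/n - 2 q^n + q^(2n-1)` with real powers. -/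
theorem stmt_4 (n : ℝ) (hn : 2 < n) (q : ℝ) (hq : q ∈ Set.Ioc (0 : ℝ) (1 / 2)) :
    0 < 2 / n - 2 * q ^ n + q ^ (2 * n - 1) := by
  obtain ⟨hq₀, hq_half⟩ := hq
  have h_small : q ^ n < n⁻¹ := rpow_lt_inv_self_of_le_half hq₀.le hq_half (by linarith)
  have h_tail : 0 < q ^ (2 * n - 1) := rpow_pos_of_pos hq₀ _
  rw [div_eq_mul_inv]
  linarith
end

section
/- The expected number of tests in the A2 square array scheme satisfies: under the binomial testing assumptions with healthy probability q, for an n×n array (n ≥ 2 integer) of i.i.d. Bernoulli(1-q) infection indicators, the expected total number of tests equals 2n + n²(1 - 2q^n + q^{2n-1}), where the tests are: n row pools, n column pools, and one confirmatory test for each cell lying in both a positive row and a positive column. -/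
/-!
By linearity the expected number of confirmatory tests is the sum over cells of the probability
that the cell's row and column are both positive. Passing to complements, this probability is
`1 - P(row clean) - P(column clean) + P(row and column clean)`; by independence a set of `k`
cells is clean with probability `q ^ k`, and a row and a column together cover `2n - 1` cells
because they share the cell itself.
-/

open MeasureTheory Set Finset

theorem probReal_inter_eq_one_sub_compl {Ω : Type*} [MeasurableSpace Ω] (μ : Measure Ω)
    [IsProbabilityMeasure μ] {A B : Set Ω} (hA : MeasurableSet A) (hB : MeasurableSet B) :
    μ.real (A ∩ B) = 1 - μ.real Aᶜ - μ.real Bᶜ + μ.real (Aᶜ ∩ Bᶜ) := by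
  have h := measureReal_union_add_inter (μ := μ) (s := Aᶜ) hB.compl
  rw [← compl_inter, probReal_compl_eq_one_sub (hA.inter hB)] at h
  linarith

theorem integral_card_filter {Ω ι : Type*} [MeasurableSpace Ω] [Fintype ι] (μ : Measure Ω)
    [IsFiniteMeasure μ] (P : ι → Ω → Prop) [∀ i, DecidablePred (P i)]
    (hP : ∀ i, MeasurableSet {ω | P i ω}) :
    ∫ ω, (#{i | P i ω} : ℝ) ∂μ = ∑ i, μ.real {ω | P i ω} := by
  have hsum : ∀ ω, (#{i | P i ω} : ℝ) = ∑ i, {ω | P i ω}.indicator 1 ω := by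
    intro ω
    rw [natCast_card_filter]
    exact sum_congr rfl fun i _ => by simp [Set.indicator_apply]
  simp_rw [hsum]
  rw [integral_finsetSum _ fun i _ => (integrable_const 1).indicator (hP i)]
  exact sum_congr rfl fun i _ => integral_indicator_one (hP i)

section Product

variable {ι α : Type*} [Fintype ι] [MeasurableSpace α] (ν : Measure α) [IsProbabilityMeasure ν]

theorem measureReal_pi_forall_mem (A : Set α) (S : Finset ι) :
    (Measure.pi fun _ : ι => ν).real {ω | ∀ s ∈ S, ω s ∈ A} = ν.real A ^ #S := by
  have : {ω : ι → α | ∀ s ∈ S, ω s ∈ A} = (S : Set ι).pi fun _ => A := by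
    ext ω; simp
  rw [this, measureReal_def, Measure.pi_pi_finset, prod_const, ENNReal.toReal_pow,
    measureReal_def]

theorem measureReal_pi_exists_mem_and_exists_mem [DecidableEq ι] {A : Set α} (hA : MeasurableSet A)
    (S R : Finset ι) :
    (Measure.pi fun _ : ι => ν).real {ω | (∃ s ∈ S, ω s ∈ A) ∧ (∃ s ∈ R, ω s ∈ A)}
      = 1 - ν.real Aᶜ ^ #S - ν.real Aᶜ ^ #R + ν.real Aᶜ ^ #(S ∪ R) := by
  have hmeas : ∀ T : Finset ι, MeasurableSet {ω : ι → α | ∃ s ∈ T, ω s ∈ A} := by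
    intro T
    have : {ω : ι → α | ∃ s ∈ T, ω s ∈ A} = ⋃ s ∈ T, (fun ω => ω s) ⁻¹' A := by ext; simp
    rw [this]
    exact T.measurableSet_biUnion fun s _ => measurable_pi_apply s hA
  have hcompl : ∀ T : Finset ι, {ω : ι → α | ∃ s ∈ T, ω s ∈ A}ᶜ = {ω | ∀ s ∈ T, ω s ∈ Aᶜ} := by
    intro T; ext ω; simp
  have hboth : {ω : ι → α | ∀ s ∈ S, ω s ∈ Aᶜ} ∩ {ω | ∀ s ∈ R, ω s ∈ Aᶜ}
      = {ω | ∀ s ∈ S ∪ R, ω s ∈ Aᶜ} := by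
    ext ω; simp [or_imp, forall_and]
  rw [ofPred_and, probReal_inter_eq_one_sub_compl _ (hmeas S) (hmeas R), hcompl, hcompl, hboth]
  simp only [measureReal_pi_forall_mem]

end Product

theorem PMF.toMeasure_bernoulli_real_false (p : NNReal) (h : p ≤ 1) :
    (PMF.bernoulli p h).toMeasure.real {false} = 1 - p := by
  rw [measureReal_def, PMF.toMeasure_apply_singleton _ _ (measurableSet_singleton _),
    PMF.bernoulli_apply, cond_false, ENNReal.coe_toReal, NNReal.coe_sub h, NNReal.coe_one]

theorem measureReal_pi_row_and_col_exists (ν : Measure Bool) [IsProbabilityMeasure ν] {n : ℕ}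
    (i j : Fin n) :
    (Measure.pi fun _ : Fin n × Fin n => ν).real
        {ω | (∃ j', ω (i, j') = true) ∧ (∃ i', ω (i', j) = true)}
      = 1 - 2 * ν.real {false} ^ n + ν.real {false} ^ (2 * n - 1) := by
  classical
  set row : Finset (Fin n × Fin n) := {i} ×ˢ Finset.univ
  set col : Finset (Fin n × Fin n) := Finset.univ ×ˢ {j}
  have hrow : #row = n := by simp [row]
  have hcol : #col = n := by simp [col]
  have hunion : #(row ∪ col) = 2 * n - 1 := by
    have hinter : row ∩ col = {(i, j)} := by ext ⟨a, b⟩; simp [row, col, eq_comm]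
    have := card_union_add_card_inter row col
    rw [hinter, hrow, hcol, Finset.card_singleton] at this
    omega
  have hset : {ω : Fin n × Fin n → Bool | (∃ j', ω (i, j') = true) ∧ (∃ i', ω (i', j) = true)}
      = {ω | (∃ s ∈ row, ω s ∈ ({true} : Set Bool)) ∧ (∃ s ∈ col, ω s ∈ ({true} : Set Bool))} := by
    ext ω; simp [row, col]
  have hfalse : ({true} : Set Bool)ᶜ = {false} := by ext b; simp
  rw [hset, measureReal_pi_exists_mem_and_exists_mem ν (measurableSet_singleton _), hfalse, hrow,
    hcol, hunion]
  ring

open scoped Classical in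
/-- A2 square-array scheme under binomial testing assumptions: for an `n×n`
array (`n ≥ 2`) of i.i.d. Bernoulli(`1-q`) infection indicators, the expected
total number of tests (the `n` row pools, the `n` column pools, plus one
confirmatory test for each cell lying in a positive row and a positive column)
equals `2n + n²(1 - 2q^n + q^(2n-1))`. -/
theorem stmt_17 (n : ℕ) (q : ℝ) (hq : q ∈ Set.Ioo (0 : ℝ) 1)
    (hple : ENNReal.ofReal (1 - q) ≤ 1)
    (μ : Measure ((Fin n × Fin n) → Bool))
    (hμ : μ = Measure.pi fun _ : Fin n × Fin n =>
      (PMF.bernoulli (ENNReal.ofReal (1 - q)).toNNReal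
        (by simpa using ENNReal.toNNReal_mono ENNReal.one_ne_top hple)).toMeasure)
    (T : ((Fin n × Fin n) → Bool) → ℝ)
    (hT : T = fun ω : (Fin n × Fin n) → Bool => 2 * n + ((
      (Finset.univ.filter (fun ij : Fin n × Fin n =>
        (∃ j' : Fin n, ω (ij.1, j') = true) ∧
        (∃ i' : Fin n, ω (i', ij.2) = true))).card) : ℝ)) :
    ∫ ω, T ω ∂μ = 2 * n + n ^ 2 * (1 - 2 * q ^ n + q ^ (2 * n - 1)) := by
  have hq_le : 0 ≤ 1 - q := by linarith [hq.2]
  -- Abstracting the Bernoulli law first: its proof argument blocks rewriting inside `μ`.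
  obtain ⟨ν, _, hν, rfl⟩ : ∃ ν : Measure Bool, IsProbabilityMeasure ν ∧ ν.real {false} = q ∧
      μ = Measure.pi fun _ => ν := by
    refine ⟨_, inferInstance, (PMF.toMeasure_bernoulli_real_false _ _).trans ?_, hμ⟩
    rw [ENNReal.coe_toNNReal_eq_toReal, ENNReal.toReal_ofReal hq_le, sub_sub_cancel]
  subst hT
  rw [integral_add (integrable_const _) .of_finite, integral_const, probReal_univ, one_smul,
    integral_card_filter _ _ fun _ => .of_discrete]
  simp_rw [measureReal_pi_row_and_col_exists, hν, sum_const, card_univ,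
    Fintype.card_prod, Fintype.card_fin, nsmul_eq_mul]
  push_cast
  ring
end
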